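/- Let S be a symmetric d×d real matrix with λ_min the smallest and λ_max the largest eigenvalue, v a unit eigenvector of S with eigenvalue λ. For any w ∈ ℝᵐ with ∑wᵢ = 1, ∑|wᵢ| ≤ c, and any δᵢ ∈ ℝᵈ with ∑wᵢδᵢ = 0 and ‖δᵢ‖ ≤ 1, we have ∑ᵢ wᵢ δᵢᵀ S δᵢ ≥ ((c+1)/2)·min(λ_min, 0) + ((1−c)/2)·max(λ_max, 0). -/

import Mathlib

open Matrix BigOperators

/-! Each `δᵢᵀ S δᵢ` lies in `[min λ_min 0, max λ_max 0]`, since `λ_min ‖x‖² ≤ xᵀ S x ≤ λ_max ‖x‖²`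
and `‖δᵢ‖² ∈ [0, 1]`. Splitting the weights into positive and negative parts, whose sums are
`(s + 1) / 2` and `(1 - s) / 2` with `s = ∑ |wᵢ| ≤ c`, bounds the weighted sum from below. -/

theorem Matrix.mem_spectrum_iff_exists_mulVec_eq_smul {n K : Type*} [Fintype n] [DecidableEq n]
    [Field K] (A : Matrix n n K) (μ : K) :
    μ ∈ spectrum K A ↔ ∃ v : n → K, v ≠ 0 ∧ A *ᵥ v = μ • v := by
  rw [← spectrum_toLin', ← Module.End.hasEigenvalue_iff_mem_spectrum]
  constructor
  · intro h
    obtain ⟨v, hv⟩ := h.exists_hasEigenvector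
    exact ⟨v, hv.2, by simpa using hv.apply_eq_smul⟩
  · rintro ⟨v, hv, hAv⟩
    exact Module.End.hasEigenvalue_of_hasEigenvector
      ⟨by simpa [Module.End.mem_eigenspace_iff] using hAv, hv⟩

namespace Matrix.IsSymm

variable {n : Type*} [Fintype n] [DecidableEq n] {A : Matrix n n ℝ}

theorem mul_dotProduct_self_le_dotProduct_mulVec (hA : A.IsSymm) {l : ℝ}
    (hl : ∀ μ ∈ spectrum ℝ A, l ≤ μ) (x : n → ℝ) : l * (x ⬝ᵥ x) ≤ x ⬝ᵥ A *ᵥ x := by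
  have hpsd : (A - algebraMap ℝ _ l).PosSemidef := by
    refine posSemidef_iff_isHermitian_and_spectrum_nonneg.2 ⟨?_, ?_⟩
    · exact (isHermitian_iff_isSymm.2 hA).sub (IsSelfAdjoint.algebraMap _ (.all l))
    · rw [← spectrum.sub_singleton_eq]
      rintro _ ⟨μ, hμ, _, rfl, rfl⟩
      exact sub_nonneg.2 (hl μ hμ)
  simpa [Algebra.algebraMap_eq_smul_one, sub_mulVec, smul_mulVec, dotProduct_smul]
    using hpsd.dotProduct_mulVec_nonneg x

theorem dotProduct_mulVec_le_mul_dotProduct_self (hA : A.IsSymm) {u : ℝ}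
    (hu : ∀ μ ∈ spectrum ℝ A, μ ≤ u) (x : n → ℝ) : x ⬝ᵥ A *ᵥ x ≤ u * (x ⬝ᵥ x) := by
  have hneg : ∀ μ ∈ spectrum ℝ (-A), -u ≤ μ := fun μ hμ ↦ by
    rw [← spectrum.neg_eq] at hμ
    exact neg_le.1 (hu _ hμ)
  simpa [neg_mulVec] using hA.neg.mul_dotProduct_self_le_dotProduct_mulVec hneg x

theorem dotProduct_mulVec_mem_Icc_of_dotProduct_self_le_one (hA : A.IsSymm) {l u : ℝ}
    (hl : ∀ μ ∈ spectrum ℝ A, l ≤ μ) (hu : ∀ μ ∈ spectrum ℝ A, μ ≤ u) {x : n → ℝ}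
    (hx : x ⬝ᵥ x ≤ 1) : x ⬝ᵥ A *ᵥ x ∈ Set.Icc (min l 0) (max u 0) := by
  have hx0 : 0 ≤ x ⬝ᵥ x := dotProduct_self_star_nonneg x
  have hlx := hA.mul_dotProduct_self_le_dotProduct_mulVec hl x
  have hux := hA.dotProduct_mulVec_le_mul_dotProduct_self hu x
  constructor
  · nlinarith [min_le_left l 0, min_le_right l 0]
  · nlinarith [le_max_left u 0, le_max_right u 0]

end Matrix.IsSymm

theorem le_sum_mul_of_sum_abs_le {ι : Type*} [Fintype ι] {w q : ι → ℝ} {a b c : ℝ}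
    (ha : a ≤ 0) (hb : 0 ≤ b) (hq : ∀ i, q i ∈ Set.Icc a b)
    (hw : ∑ i, w i = 1) (hwc : ∑ i, |w i| ≤ c) :
    (c + 1) / 2 * a + (1 - c) / 2 * b ≤ ∑ i, w i * q i := by
  have hterm : ∀ i, (w i + |w i|) / 2 * a + (w i - |w i|) / 2 * b ≤ w i * q i := fun i ↦ by
    obtain ⟨hqa, hqb⟩ := hq i
    rcases abs_cases (w i) with ⟨h, _⟩ | ⟨h, _⟩ <;> rw [h] <;> nlinarith
  calc (c + 1) / 2 * a + (1 - c) / 2 * b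
      ≤ (1 + ∑ i, |w i|) / 2 * a + (1 - ∑ i, |w i|) / 2 * b := by nlinarith
    _ = ∑ i, ((w i + |w i|) / 2 * a + (w i - |w i|) / 2 * b) := by
      simp only [Finset.sum_add_distrib, ← Finset.sum_mul, ← Finset.sum_div,
        Finset.sum_sub_distrib, hw]
    _ ≤ ∑ i, w i * q i := Finset.sum_le_sum fun i _ ↦ hterm i

theorem stmt_9_general (d m : ℕ) (c : ℝ)
    (S : Matrix (Fin d) (Fin d) ℝ) (hS : S.IsSymm) (lmin lmax : ℝ)
    (hmin : IsLeast {μ : ℝ | ∃ v : Fin d → ℝ, v ≠ 0 ∧ S.mulVec v = μ • v} lmin)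
    (hmax : IsGreatest {μ : ℝ | ∃ v : Fin d → ℝ, v ≠ 0 ∧ S.mulVec v = μ • v} lmax)
    (v : Fin d → ℝ)
    (w : Fin m → ℝ) (δ : Fin m → Fin d → ℝ)
    (hw1 : ∑ i, w i = 1) (hwc : ∑ i, |w i| ≤ c)
    (hδn : ∀ i, δ i ⬝ᵥ δ i ≤ 1) :
    (c + 1) / 2 * min lmin 0 + (1 - c) / 2 * max lmax 0 ≤
      ∑ i, w i * (δ i ⬝ᵥ S.mulVec (δ i)) := by
  have hlo : ∀ μ ∈ spectrum ℝ S, lmin ≤ μ := fun μ hμ ↦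
    hmin.2 ((S.mem_spectrum_iff_exists_mulVec_eq_smul μ).1 hμ)
  have hhi : ∀ μ ∈ spectrum ℝ S, μ ≤ lmax := fun μ hμ ↦
    hmax.2 ((S.mem_spectrum_iff_exists_mulVec_eq_smul μ).1 hμ)
  exact le_sum_mul_of_sum_abs_le (min_le_right _ _) (le_max_right _ _)
    (fun i ↦ hS.dotProduct_mulVec_mem_Icc_of_dotProduct_self_le_one hlo hhi (hδn i)) hw1 hwc

theorem stmt_9 (d m : ℕ) (c : ℝ) (hc : 1 ≤ c)
    (S : Matrix (Fin d) (Fin d) ℝ) (hS : S.IsSymm) (lmin lmax : ℝ)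
    (hmin : IsLeast {μ : ℝ | ∃ v : Fin d → ℝ, v ≠ 0 ∧ S.mulVec v = μ • v} lmin)
    (hmax : IsGreatest {μ : ℝ | ∃ v : Fin d → ℝ, v ≠ 0 ∧ S.mulVec v = μ • v} lmax)
    (lam : ℝ) (v : Fin d → ℝ) (hv : v ⬝ᵥ v = 1) (hev : S.mulVec v = lam • v)
    (w : Fin m → ℝ) (δ : Fin m → Fin d → ℝ)
    (hw1 : ∑ i, w i = 1) (hwc : ∑ i, |w i| ≤ c)
    (hδ0 : ∑ i, w i • δ i = 0) (hδn : ∀ i, δ i ⬝ᵥ δ i ≤ 1) :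
    (c + 1) / 2 * min lmin 0 + (1 - c) / 2 * max lmax 0 ≤
      ∑ i, w i * (δ i ⬝ᵥ S.mulVec (δ i)) :=
  stmt_9_general d m c S hS lmin lmax hmin hmax v w δ hw1 hwc hδn
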